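/- Let X and Y be locally compact, connected Hausdorff spaces, ρ a quasi-integral on C_c(X) whose corresponding topological measure μ is simple, and η a quasi-integral on C_c(Y) with corresponding compact-finite topological measure ν. The functional η × ρ is a quasi-integral; let ν × μ denote its corresponding topological measure on X × Y. Then for every open U ⊆ X × Y, the set {y ∈ Y : μ(U_y) = 1} is open and (ν × μ)(U) = ν({y ∈ Y : μ(U_y) = 1}), where U_y = {x ∈ X : (x,y) ∈ U}. If ν is finite, then for every compact K ⊆ X × Y, the set {y ∈ Y : μ(K_y) = 1} is closed and (ν × μ)(K) = ν({y ∈ Y : μ(K_y) = 1}). -/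

import Mathlib

open scoped ENNReal CompactlySupported
open CompactlySupportedContinuousMap

namespace QLF

variable {X Y : Type*}

/-- Membership in the singly generated subalgebra `B(f)`:
`g ∈ B(f)` iff `g = φ ∘ f` for some continuous `φ` with `φ 0 = 0`. -/
def InB [TopologicalSpace X] (f g : C_c(X, ℝ)) : Prop :=
  ∃ φ : C(ℝ, ℝ), φ 0 = 0 ∧ ∀ x, g x = φ (f x)

/-- A quasi-integral (quasi-linear functional) on `C_c(X)`. -/
structure IsQuasiIntegral [TopologicalSpace X] (ρ : C_c(X, ℝ) → ℝ) : Prop where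
  smul : ∀ (a : ℝ) (f : C_c(X, ℝ)), ρ (a • f) = a * ρ f
  add : ∀ f g h : C_c(X, ℝ), InB f g → InB f h → ρ (g + h) = ρ g + ρ h
  pos : ∀ f : C_c(X, ℝ), (∀ x, 0 ≤ f x) → 0 ≤ ρ f

/-- The value of the topological measure corresponding to `ρ` on an open set. -/
noncomputable def qiOpen [TopologicalSpace X] (ρ : C_c(X, ℝ) → ℝ) (U : Set X) : ℝ≥0∞ :=
  ⨆ (f : C_c(X, ℝ)) (_ : (∀ x, 0 ≤ f x ∧ f x ≤ 1) ∧ tsupport f ⊆ U), ENNReal.ofReal (ρ f)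

open Classical in
/-- The topological measure corresponding to a quasi-integral `ρ`:
on open sets given by `qiOpen`, on other (closed) sets by outer regularity. -/
noncomputable def qiMeas [TopologicalSpace X] (ρ : C_c(X, ℝ) → ℝ) (A : Set X) : ℝ≥0∞ :=
  if IsOpen A then qiOpen ρ A
  else ⨅ (U : Set X) (_ : IsOpen U ∧ A ⊆ U), qiOpen ρ U

/-- A topological measure on `X` (as a set function on all sets; only its values on
open and closed sets are constrained/meaningful). -/
def IsTopMeasure [TopologicalSpace X] (μ : Set X → ℝ≥0∞) : Prop :=
  (∀ A B : Set X, Disjoint A B → (IsCompact A ∨ IsOpen A) → (IsCompact B ∨ IsOpen B) →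
      (IsCompact (A ∪ B) ∨ IsOpen (A ∪ B)) → μ (A ∪ B) = μ A + μ B) ∧
  (∀ U : Set X, IsOpen U → μ U = ⨆ (K : Set X) (_ : IsCompact K ∧ K ⊆ U), μ K) ∧
  (∀ F : Set X, IsClosed F → μ F = ⨅ (U : Set X) (_ : IsOpen U ∧ F ⊆ U), μ U)

/-- A simple topological measure: assumes only the values 0 and 1 on open and closed sets. -/
def IsSimpleTM [TopologicalSpace X] (μ : Set X → ℝ≥0∞) : Prop :=
  IsTopMeasure μ ∧ ∀ A : Set X, IsOpen A ∨ IsClosed A → μ A = 0 ∨ μ A = 1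

/-- A simple quasi-integral: its corresponding topological measure assumes only 0 and 1. -/
def IsSimpleQI [TopologicalSpace X] (ρ : C_c(X, ℝ) → ℝ) : Prop :=
  ∀ A : Set X, IsOpen A ∨ IsClosed A → qiMeas ρ A = 0 ∨ qiMeas ρ A = 1

/-- An almost simple quasi-integral: its corresponding topological measure is a positive
scalar multiple of a simple topological measure. -/
def IsAlmostSimpleQI [TopologicalSpace X] (ρ : C_c(X, ℝ) → ℝ) : Prop :=
  ∃ (c : ℝ≥0∞) (μ' : Set X → ℝ≥0∞), 0 < c ∧ c ≠ ∞ ∧ IsSimpleTM μ' ∧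
    ∀ A : Set X, IsOpen A ∨ IsClosed A → qiMeas ρ A = c * μ' A

/-- The composition `φ ∘ f` as an element of `C_c(X, ℝ)`, for continuous `φ` with `φ 0 = 0`. -/
noncomputable def compCc [TopologicalSpace X] (φ : C(ℝ, ℝ)) (hφ : φ 0 = 0)
    (f : C_c(X, ℝ)) : C_c(X, ℝ) :=
  ⟨⟨fun x => φ (f x), φ.continuous.comp f.continuous⟩, f.hasCompactSupport'.comp_left hφ⟩

section Products

variable [TopologicalSpace X] [TopologicalSpace Y]

/-- The section `f_y ∈ C_c(X)` of `f ∈ C_c(X × Y)`, `f_y (x) = f (x, y)`. -/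
noncomputable def fiberY [T2Space X] (f : C_c(X × Y, ℝ)) (y : Y) : C_c(X, ℝ) :=
  ⟨⟨fun x => f (x, y), f.continuous.comp (continuous_id.prodMk continuous_const)⟩,
    HasCompactSupport.intro (f.hasCompactSupport'.image continuous_fst)
      (fun x hx => by
        by_contra h
        exact hx ⟨(x, y), subset_tsupport _ h, rfl⟩)⟩

/-- The section `f_x ∈ C_c(Y)` of `f ∈ C_c(X × Y)`, `f_x (y) = f (x, y)`. -/
noncomputable def fiberX [T2Space Y] (f : C_c(X × Y, ℝ)) (x : X) : C_c(Y, ℝ) :=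
  ⟨⟨fun y => f (x, y), f.continuous.comp (continuous_const.prodMk continuous_id)⟩,
    HasCompactSupport.intro (f.hasCompactSupport'.image continuous_snd)
      (fun y hy => by
        by_contra h
        exact hy ⟨(x, y), subset_tsupport _ h, rfl⟩)⟩

/-- `T_ρ(f) (y) = ρ (f_y)` as a bare function on `Y`. -/
noncomputable def Tmap [T2Space X] (ρ : C_c(X, ℝ) → ℝ) (f : C_c(X × Y, ℝ)) : Y → ℝ :=
  fun y => ρ (fiberY f y)

/-- `S_η(f) (x) = η (f_x)` as a bare function on `X`. -/
noncomputable def Smap [T2Space Y] (η : C_c(Y, ℝ) → ℝ) (f : C_c(X × Y, ℝ)) : X → ℝ :=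
  fun x => η (fiberX f x)

open Classical in
/-- `T_ρ(f)` as an element of `C_c(Y, ℝ)` (when `ρ` is a quasi-integral, `T_ρ(f)` is indeed
continuous with compact support, and this definition takes the first branch). -/
noncomputable def TCc [T2Space X] (ρ : C_c(X, ℝ) → ℝ) (f : C_c(X × Y, ℝ)) : C_c(Y, ℝ) :=
  if h : Continuous (Tmap ρ f) ∧ HasCompactSupport (Tmap ρ f)
  then ⟨⟨Tmap ρ f, h.1⟩, h.2⟩ else 0

open Classical in
/-- `S_η(f)` as an element of `C_c(X, ℝ)`. -/
noncomputable def SCc [T2Space Y] (η : C_c(Y, ℝ) → ℝ) (f : C_c(X × Y, ℝ)) : C_c(X, ℝ) :=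
  if h : Continuous (Smap η f) ∧ HasCompactSupport (Smap η f)
  then ⟨⟨Smap η f, h.1⟩, h.2⟩ else 0

/-- The repeated quasi-integral `(η × ρ) (f) = η (T_ρ (f))`. -/
noncomputable def prodQI [T2Space X] (η : C_c(Y, ℝ) → ℝ) (ρ : C_c(X, ℝ) → ℝ) :
    C_c(X × Y, ℝ) → ℝ := fun f => η (TCc ρ f)

/-- The repeated quasi-integral `(ρ × η) (f) = ρ (S_η (f))`. -/
noncomputable def prodQI' [T2Space Y] (ρ : C_c(X, ℝ) → ℝ) (η : C_c(Y, ℝ) → ℝ) :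
    C_c(X × Y, ℝ) → ℝ := fun f => ρ (SCc η f)

/-- The tensor product `(g ⊗ h) (x, y) = g (x) * h (y)` as an element of `C_c(X × Y, ℝ)`. -/
noncomputable def tensor (g : C_c(X, ℝ)) (h : C_c(Y, ℝ)) : C_c(X × Y, ℝ) :=
  ⟨⟨fun p => g p.1 * h p.2,
      (g.continuous.comp continuous_fst).mul (h.continuous.comp continuous_snd)⟩,
    HasCompactSupport.intro' (g.hasCompactSupport'.prod h.hasCompactSupport')
      ((isClosed_tsupport _).prod (isClosed_tsupport _))
      (fun p hp => by
        rcases not_and_or.mp (by simpa [Set.mem_prod] using hp) with h1 | h1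
        · simp [image_eq_zero_of_notMem_tsupport h1]
        · simp [image_eq_zero_of_notMem_tsupport h1])⟩

end Products

/-- A topological measure is subadditive (equivalently, extends to a Borel measure). -/
def IsSubadditiveOnOpens [TopologicalSpace X] (μ : Set X → ℝ≥0∞) : Prop :=
  ∀ U V : Set X, IsOpen U → IsOpen V → μ (U ∪ V) ≤ μ U + μ V

/-- `μ` is a positive scalar multiple of a point mass `δ_{x₀}` (on open and closed sets). -/
def IsPointMassMultiple [TopologicalSpace X] (μ : Set X → ℝ≥0∞) : Prop :=
  ∃ (c : ℝ≥0∞) (x₀ : X), 0 < c ∧ c ≠ ∞ ∧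
    ∀ A : Set X, IsOpen A ∨ IsClosed A →
      μ A = c * A.indicator (fun _ => (1 : ℝ≥0∞)) x₀

end QLF

/-!
For a simple quasi-integral `ρ` with topological measure `μ` and `k ≥ 0`, `μ {k > t}` is `1` for
`0 ≤ t < ρ k` and `0` for `t > ρ k`, by a Markov inequality and a truncation argument; since two
disjoint open sets cannot both have measure `1`, also `μ {k < t} = 0` for `t < ρ k`. Hence `ρ` acts
on each `B(k)` like evaluation at a point: `ρ (φ ∘ k) = φ (ρ k)`, and `ρ` is `2`-Lipschitz for the
sup norm. So `T_ρ f` is continuous, respects the relations defining `B(f)`, and `η × ρ` is a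
quasi-integral.

For open `U`, every `f ≤ 1` supported in `U` has `T_ρ f ≤ 1` supported in
`W = {y | μ(U_y) = 1}`, so `(η × ρ)(f) ≤ ν(W)` (compact-finiteness of `ν` controls the boundary
of the support). Conversely, over a compact part of `W` finitely many tubes `supp h_i × M_i ⊆ U`
with `ρ h_i = 1` yield a Urysohn function `f` with `T_ρ f = 1` there. For compact `K`, outer
regularity reduces everything to the open case, once every open `V ⊇ W_K` is shown to contain
`W_O` for some open `O ⊇ K`.
-/

namespace QLF

open Set Filter Topology

noncomputable def cmin (t : ℝ) : C(ℝ, ℝ) := ⟨fun s => min s t, by fun_prop⟩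
noncomputable def cmax (t : ℝ) : C(ℝ, ℝ) := ⟨fun s => max s t, by fun_prop⟩
noncomputable def cexcess (t : ℝ) : C(ℝ, ℝ) := ⟨fun s => max (s - t) 0, by fun_prop⟩
noncomputable def cneg : C(ℝ, ℝ) := ⟨fun s => max (-s) 0, by fun_prop⟩

@[simp] lemma cmin_apply (t s : ℝ) : cmin t s = min s t := rfl
@[simp] lemma cmax_apply (t s : ℝ) : cmax t s = max s t := rfl
@[simp] lemma cexcess_apply (t s : ℝ) : cexcess t s = max (s - t) 0 := rfl
@[simp] lemma cneg_apply (s : ℝ) : cneg s = max (-s) 0 := rfl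

section QuasiIntegral

variable {Z : Type*} [TopologicalSpace Z] {τ : C_c(Z, ℝ) → ℝ}

@[simp] lemma compCc_apply {φ : C(ℝ, ℝ)} {hφ : φ 0 = 0} {f : C_c(Z, ℝ)} (x : Z) :
    compCc φ hφ f x = φ (f x) := rfl

lemma tsupport_compCc_subset {φ : C(ℝ, ℝ)} {hφ : φ 0 = 0} {f : C_c(Z, ℝ)} :
    tsupport (compCc φ hφ f) ⊆ tsupport f :=
  closure_mono fun x hx h0 => hx (by simp [h0, hφ])

lemma tsupport_compCc_cexcess_subset {t : ℝ} {ht : cexcess t 0 = 0} {f : C_c(Z, ℝ)} :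
    tsupport (compCc (cexcess t) ht f) ⊆ {x | t ≤ f x} :=
  closure_minimal (fun x hx => by
    by_contra h
    exact hx (by simp [(show f x < t from not_le.1 h).le]))
    (isClosed_le continuous_const f.continuous)

lemma isOpen_lt_apply (f : C_c(Z, ℝ)) (t : ℝ) : IsOpen {x | t < f x} :=
  isOpen_lt continuous_const f.continuous

lemma isOpen_apply_lt (f : C_c(Z, ℝ)) (t : ℝ) : IsOpen {x | f x < t} :=
  isOpen_lt f.continuous continuous_const

lemma InB.compCc {f : C_c(Z, ℝ)} {φ : C(ℝ, ℝ)} (hφ : φ 0 = 0) : InB f (compCc φ hφ f) :=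
  ⟨φ, hφ, fun _ => rfl⟩

noncomputable def pPart (f : C_c(Z, ℝ)) : C_c(Z, ℝ) := compCc (cmax 0) (by simp) f
noncomputable def nPart (f : C_c(Z, ℝ)) : C_c(Z, ℝ) := compCc cneg (by simp) f

@[simp] lemma pPart_apply (f : C_c(Z, ℝ)) (x : Z) : pPart f x = max (f x) 0 := rfl
@[simp] lemma nPart_apply (f : C_c(Z, ℝ)) (x : Z) : nPart f x = max (-f x) 0 := rfl

lemma le_qiOpen (τ : C_c(Z, ℝ) → ℝ) {f : C_c(Z, ℝ)} {U : Set Z}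
    (hf : ∀ x, 0 ≤ f x ∧ f x ≤ 1) (hfU : tsupport f ⊆ U) :
    ENNReal.ofReal (τ f) ≤ qiOpen τ U :=
  le_iSup₂ (f := fun (f : C_c(Z, ℝ)) (_ : (∀ x, 0 ≤ f x ∧ f x ≤ 1) ∧ tsupport f ⊆ U) =>
    ENNReal.ofReal (τ f)) f ⟨hf, hfU⟩

lemma exists_lt_of_lt_qiOpen {U : Set Z} {a : ℝ≥0∞} (h : a < qiOpen τ U) :
    ∃ f : C_c(Z, ℝ), (∀ x, 0 ≤ f x ∧ f x ≤ 1) ∧ tsupport f ⊆ U ∧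
      a < ENNReal.ofReal (τ f) := by
  obtain ⟨f, hf⟩ := lt_iSup_iff.1 h
  obtain ⟨hfU, hlt⟩ := lt_iSup_iff.1 hf
  exact ⟨f, hfU.1, hfU.2, hlt⟩

lemma qiOpen_mono (τ : C_c(Z, ℝ) → ℝ) {U V : Set Z} (h : U ⊆ V) : qiOpen τ U ≤ qiOpen τ V :=
  iSup₂_le fun _ hf => le_qiOpen τ hf.1 (hf.2.trans h)

lemma qiMeas_of_isOpen (τ : C_c(Z, ℝ) → ℝ) {U : Set Z} (hU : IsOpen U) :
    qiMeas τ U = qiOpen τ U :=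
  if_pos hU

lemma qiMeas_eq_iInf (τ : C_c(Z, ℝ) → ℝ) (A : Set Z) :
    qiMeas τ A = ⨅ (U : Set Z) (_ : IsOpen U ∧ A ⊆ U), qiOpen τ U := by
  by_cases hA : IsOpen A
  · rw [qiMeas_of_isOpen τ hA]
    exact le_antisymm (le_iInf₂ fun U hU => qiOpen_mono τ hU.2) (iInf₂_le A ⟨hA, subset_rfl⟩)
  · exact if_neg hA

lemma qiMeas_le_qiOpen (τ : C_c(Z, ℝ) → ℝ) {A U : Set Z} (hU : IsOpen U) (hAU : A ⊆ U) :
    qiMeas τ A ≤ qiOpen τ U :=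
  (qiMeas_eq_iInf τ A).trans_le (iInf₂_le U ⟨hU, hAU⟩)

lemma qiOpen_interior_le_qiMeas (τ : C_c(Z, ℝ) → ℝ) (A : Set Z) :
    qiOpen τ (interior A) ≤ qiMeas τ A :=
  (le_iInf₂ fun _ hU => qiOpen_mono τ (interior_subset.trans hU.2)).trans_eq
    (qiMeas_eq_iInf τ A).symm

namespace IsQuasiIntegral

lemma map_zero (hτ : IsQuasiIntegral τ) : τ 0 = 0 := by
  simpa using hτ.smul 0 0

lemma map_le_map_of_InB (hτ : IsQuasiIntegral τ) {w g h : C_c(Z, ℝ)} (hg : InB w g)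
    (hhg : InB w (h - g)) (hle : ∀ x, g x ≤ h x) : τ g ≤ τ h := by
  have hsum := hτ.add w (h - g) g hhg hg
  rw [sub_add_cancel] at hsum
  linarith [hτ.pos (h - g) fun x => sub_nonneg.2 (hle x)]

lemma map_eq_cmin_add_cexcess (hτ : IsQuasiIntegral τ) (f : C_c(Z, ℝ)) {t : ℝ} (ht : 0 ≤ t) :
    τ f = τ (compCc (cmin t) (by simp [ht]) f) + τ (compCc (cexcess t) (by simp [ht]) f) := by
  rw [← hτ.add f _ _ (InB.compCc _) (InB.compCc _)]
  congr 1
  ext x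
  rcases le_total (f x) t with h | h <;> simp [h]

lemma map_eq_pPart_sub_nPart (hτ : IsQuasiIntegral τ) (f : C_c(Z, ℝ)) :
    τ f = τ (pPart f) - τ (nPart f) := by
  have h := hτ.add f (pPart f) ((-1 : ℝ) • nPart f) (InB.compCc _)
    ⟨-cneg, by simp, fun x => by simp⟩
  rw [hτ.smul] at h
  calc τ f = τ (pPart f + (-1 : ℝ) • nPart f) := by
        congr 1
        ext x
        rcases le_total (f x) 0 with hx | hx <;> simp [hx]
    _ = τ (pPart f) - τ (nPart f) := by rw [h]; ring

lemma qiOpen_empty (hτ : IsQuasiIntegral τ) : qiOpen τ (∅ : Set Z) = 0 := by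
  refine le_antisymm (iSup₂_le fun f hf => ?_) zero_le
  have hf0 : f = 0 := by
    ext x
    by_contra hx
    exact hf.2 (subset_tsupport f hx)
  simp [hf0, hτ.map_zero]

lemma ofReal_le_mul_qiOpen (hτ : IsQuasiIntegral τ) {f : C_c(Z, ℝ)} {U : Set Z} {c : ℝ}
    (hc : 0 < c) (h0 : ∀ x, 0 ≤ f x) (h1 : ∀ x, f x ≤ c) (hfU : tsupport f ⊆ U) :
    ENNReal.ofReal (τ f) ≤ ENNReal.ofReal c * qiOpen τ U := by
  have hscaled : ∀ x, 0 ≤ (c⁻¹ • f) x ∧ (c⁻¹ • f) x ≤ 1 := fun x => by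
    simp only [CompactlySupportedContinuousMap.smul_apply, smul_eq_mul]
    exact ⟨mul_nonneg (inv_nonneg.2 hc.le) (h0 x), by rw [inv_mul_le_iff₀ hc, mul_one]; exact h1 x⟩
  have hsupp : tsupport (c⁻¹ • f) ⊆ U :=
    (tsupport_smul_subset_right (fun _ => c⁻¹) f).trans hfU
  calc ENNReal.ofReal (τ f) = ENNReal.ofReal (c * τ (c⁻¹ • f)) := by
        rw [← hτ.smul, smul_inv_smul₀ hc.ne']
    _ = ENNReal.ofReal c * ENNReal.ofReal (τ (c⁻¹ • f)) := ENNReal.ofReal_mul hc.le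
    _ ≤ ENNReal.ofReal c * qiOpen τ U := by gcongr; exact le_qiOpen τ hscaled hsupp

lemma map_le_mul_toReal (hτ : IsQuasiIntegral τ) {f : C_c(Z, ℝ)} {U : Set Z} {c : ℝ}
    (hc : 0 < c) (h0 : ∀ x, 0 ≤ f x) (h1 : ∀ x, f x ≤ c) (hfU : tsupport f ⊆ U)
    (hU : qiOpen τ U ≠ ∞) : τ f ≤ c * (qiOpen τ U).toReal := by
  have h := ENNReal.toReal_mono (ENNReal.mul_ne_top ENNReal.ofReal_ne_top hU)
    (hτ.ofReal_le_mul_qiOpen hc h0 h1 hfU)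
  rwa [ENNReal.toReal_ofReal (hτ.pos f h0), ENNReal.toReal_mul,
    ENNReal.toReal_ofReal hc.le] at h

lemma map_eq_zero_of_qiOpen_eq_zero (hτ : IsQuasiIntegral τ) {f : C_c(Z, ℝ)} {U : Set Z}
    (h0 : ∀ x, 0 ≤ f x) (hfU : tsupport f ⊆ U) (hU : qiOpen τ U = 0) : τ f = 0 := by
  obtain ⟨C, hC⟩ := f.continuous.bounded_above_of_compact_support f.hasCompactSupport'
  have h := hτ.ofReal_le_mul_qiOpen (lt_max_of_lt_right one_pos) h0
    (fun x => (Real.le_norm_self (f x)).trans ((hC x).trans (le_max_left C 1))) hfU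
  rw [hU, mul_zero, nonpos_iff_eq_zero, ENNReal.ofReal_eq_zero] at h
  exact le_antisymm h (hτ.pos f h0)

lemma map_le_map_of_eq_one (hτ : IsQuasiIntegral τ) {g h : C_c(Z, ℝ)}
    (hg0 : ∀ x, 0 ≤ g x) (hg1 : ∀ x, g x ≤ 1) (hh0 : ∀ x, 0 ≤ h x) (hh1 : ∀ x, h x ≤ 1)
    (hgh : ∀ x, 0 < g x → h x = 1) : τ g ≤ τ h := by
  have hcases : ∀ x, g x = 0 ∨ (0 < g x ∧ h x = 1) := fun x =>
    (hg0 x).eq_or_lt.imp Eq.symm fun hx => ⟨hx, hgh x hx⟩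
  -- `g` and `h - g` both lie in `B(h + g)`
  refine hτ.map_le_map_of_InB (w := h + g) ⟨cexcess 1, by simp, fun x => ?_⟩
    ⟨⟨fun s => min s 1 - max (s - 1) 0, by fun_prop⟩, by simp, fun x => ?_⟩ fun x => ?_
  · rcases hcases x with hx | ⟨-, hx⟩ <;> simp [hx, hh1 x, hg0 x]
  · rcases hcases x with hx | ⟨-, hx⟩ <;> simp [hx, hh1 x, hg0 x]
  · rcases hcases x with hx | ⟨-, hx⟩ <;> simp [hx, hh0 x, hg1 x]

lemma qiOpen_le_of_eq_one (hτ : IsQuasiIntegral τ) {h : C_c(Z, ℝ)} {V : Set Z}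
    (hh0 : ∀ x, 0 ≤ h x) (hh1 : ∀ x, h x ≤ 1) (hV : ∀ x ∈ V, h x = 1) :
    qiOpen τ V ≤ ENNReal.ofReal (τ h) :=
  iSup₂_le fun g hg => ENNReal.ofReal_le_ofReal <|
    hτ.map_le_map_of_eq_one (fun x => (hg.1 x).1) (fun x => (hg.1 x).2) hh0 hh1
      fun x hx => hV x (hg.2 (subset_tsupport g hx.ne'))

lemma ofReal_mul_qiOpen_lt_le (hτ : IsQuasiIntegral τ) {g : C_c(Z, ℝ)} (hg : ∀ x, 0 ≤ g x)
    {t : ℝ} (ht : 0 < t) :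
    ENNReal.ofReal t * qiOpen τ {x | t < g x} ≤ ENNReal.ofReal (τ g) := by
  set m := compCc (cmin t) (by simp [ht.le]) g
  have hm : qiOpen τ {x | t < g x} ≤ ENNReal.ofReal (τ (t⁻¹ • m)) := by
    refine hτ.qiOpen_le_of_eq_one (fun x => ?_) (fun x => ?_) fun x hx => ?_
    · simp only [CompactlySupportedContinuousMap.smul_apply, smul_eq_mul]
      exact mul_nonneg (inv_nonneg.2 ht.le) (le_min (hg x) ht.le)
    · simp only [CompactlySupportedContinuousMap.smul_apply, smul_eq_mul]
      rw [inv_mul_le_iff₀ ht, mul_one]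
      exact min_le_right _ _
    · simp [m, min_eq_right (show t < g x from hx).le, ht.ne']
  have hmg : τ m ≤ τ g := by
    rw [hτ.map_eq_cmin_add_cexcess g ht.le]
    linarith [hτ.pos (compCc (cexcess t) (by simp [ht.le]) g) fun x => by simp]
  calc ENNReal.ofReal t * qiOpen τ {x | t < g x}
      ≤ ENNReal.ofReal t * ENNReal.ofReal (τ (t⁻¹ • m)) := by gcongr
    _ = ENNReal.ofReal (τ m) := by
        rw [← ENNReal.ofReal_mul ht.le, ← hτ.smul, smul_inv_smul₀ ht.ne']
    _ ≤ ENNReal.ofReal (τ g) := ENNReal.ofReal_le_ofReal hmg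

/-- Only the support of `v`, not its closure, has to lie in `W`: the part of `v` below a small
level `t` costs at most `t` times the finite measure of `V`. -/
lemma ofReal_le_qiOpen_of_support_subset (hτ : IsQuasiIntegral τ) {v : C_c(Z, ℝ)}
    {V W : Set Z} (hv0 : ∀ x, 0 ≤ v x) (hv1 : ∀ x, v x ≤ 1)
    (hvW : Function.support v ⊆ W) (hvV : tsupport v ⊆ V) (hV : qiOpen τ V ≠ ∞) :
    ENNReal.ofReal (τ v) ≤ qiOpen τ W := by
  by_cases hW : qiOpen τ W = ∞
  · simp [hW]
  set A := (qiOpen τ V).toReal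
  set B := (qiOpen τ W).toReal
  have hsplit : ∀ t : ℝ, 0 < t → τ v ≤ t * A + B := fun t ht => by
    rw [hτ.map_eq_cmin_add_cexcess v ht.le]
    have hlow : τ (compCc (cmin t) (by simp [ht.le]) v) ≤ t * A :=
      hτ.map_le_mul_toReal ht (fun x => le_min (hv0 x) ht.le) (fun x => min_le_right _ _)
        (tsupport_compCc_subset.trans hvV) hV
    have hhigh : τ (compCc (cexcess t) (by simp [ht.le]) v) ≤ 1 * B :=
      hτ.map_le_mul_toReal one_pos (fun x => by simp)
        (fun x => by
          simp only [compCc_apply, cexcess_apply]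
          exact max_le (by linarith [hv1 x]) zero_le_one)
        (tsupport_compCc_cexcess_subset.trans fun x hx => hvW (ht.trans_le hx).ne') hW
    linarith
  have hle : τ v ≤ B := le_of_forall_pos_le_add fun ε hε => by
    have hA : 0 ≤ A := ENNReal.toReal_nonneg
    have := hsplit (ε / (A + 1)) (by positivity)
    have : ε / (A + 1) * A ≤ ε := by
      rw [div_mul_eq_mul_div, div_le_iff₀ (by positivity)]
      nlinarith
    linarith
  calc ENNReal.ofReal (τ v) ≤ ENNReal.ofReal B := ENNReal.ofReal_le_ofReal hle
    _ = qiOpen τ W := ENNReal.ofReal_toReal hW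

end IsQuasiIntegral

end QuasiIntegral

namespace IsSimpleQI

variable {Z : Type*} [TopologicalSpace Z] {ρ : C_c(Z, ℝ) → ℝ}

lemma qiOpen_eq_zero_or_one (hρs : IsSimpleQI ρ) {U : Set Z} (hU : IsOpen U) :
    qiOpen ρ U = 0 ∨ qiOpen ρ U = 1 := by
  simpa only [qiMeas_of_isOpen ρ hU] using hρs U (Or.inl hU)

lemma qiOpen_le_one (hρs : IsSimpleQI ρ) {U : Set Z} (hU : IsOpen U) : qiOpen ρ U ≤ 1 := by
  rcases hρs.qiOpen_eq_zero_or_one hU with h | h <;> simp [h]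

lemma map_le_of_le (hρs : IsSimpleQI ρ) (hρ : IsQuasiIntegral ρ) {f : C_c(Z, ℝ)} {c : ℝ}
    (hc : 0 < c) (h0 : ∀ x, 0 ≤ f x) (h1 : ∀ x, f x ≤ c) : ρ f ≤ c := by
  have hle := hρs.qiOpen_le_one isOpen_univ
  calc ρ f ≤ c * (qiOpen ρ univ).toReal :=
        hρ.map_le_mul_toReal hc h0 h1 (subset_univ _) (hle.trans_lt ENNReal.one_lt_top).ne
    _ ≤ c * 1 := by
        gcongr
        exact ENNReal.toReal_le_of_le_ofReal zero_le_one (by simpa using hle)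
    _ = c := mul_one c

lemma not_disjoint_of_qiOpen_eq_one (hρs : IsSimpleQI ρ) (hρ : IsQuasiIntegral ρ) {U V : Set Z}
    (hU : qiOpen ρ U = 1) (hV : qiOpen ρ V = 1) : ¬ Disjoint U V := by
  intro hUV
  have half : ENNReal.ofReal (1 / 2) < 1 := by norm_num
  obtain ⟨g, hg01, hgU, hg⟩ := exists_lt_of_lt_qiOpen (hU ▸ half)
  obtain ⟨h, hh01, hhV, hh⟩ := exists_lt_of_lt_qiOpen (hV ▸ half)
  rw [ENNReal.ofReal_lt_ofReal_iff_of_nonneg (by norm_num)] at hg hh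
  have hdisj : ∀ x, g x = 0 ∨ h x = 0 := fun x => by
    by_contra! hx
    exact hUV.ne_of_mem (hgU (subset_tsupport g hx.1)) (hhV (subset_tsupport h hx.2)) rfl
  -- `g` and `h` are the positive and negative parts of `g - h`
  have hadd := hρ.add (g - h) g h ⟨cmax 0, by simp, fun x => ?_⟩ ⟨cneg, by simp, fun x => ?_⟩
  · have hle := hρs.map_le_of_le hρ one_pos (f := g + h) (fun x => add_nonneg (hg01 x).1 (hh01 x).1)
      fun x => by rcases hdisj x with hx | hx <;> simp [hx, (hg01 x).2, (hh01 x).2]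
    linarith
  · rcases hdisj x with hx | hx <;> simp [hx, (hg01 x).1, (hh01 x).1]
  · rcases hdisj x with hx | hx <;> simp [hx, (hg01 x).1, (hh01 x).1]

lemma map_le_of_qiOpen_eq_zero (hρs : IsSimpleQI ρ) (hρ : IsQuasiIntegral ρ) {g : C_c(Z, ℝ)}
    (hg : ∀ x, 0 ≤ g x) {t : ℝ} (ht : 0 ≤ t) {U : Set Z} (hgU : {x | t < g x} ⊆ U)
    (hU : qiOpen ρ U = 0) : ρ g ≤ t := by
  refine le_of_forall_gt_imp_ge_of_dense fun t' htt' => ?_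
  have ht' : 0 < t' := ht.trans_lt htt'
  rw [hρ.map_eq_cmin_add_cexcess g ht'.le]
  have hlow := hρs.map_le_of_le hρ ht' (f := compCc (cmin t') (by simp [ht'.le]) g)
    (fun x => by simp [hg x, ht'.le]) (fun x => by simp)
  have hhigh := hρ.map_eq_zero_of_qiOpen_eq_zero
    (f := compCc (cexcess t') (by simp [ht'.le]) g) (fun x => by simp)
    (tsupport_compCc_cexcess_subset.trans fun x hx => hgU (htt'.trans_le hx)) hU
  linarith

lemma qiOpen_gt_eq_zero_of_map_lt (hρs : IsSimpleQI ρ) (hρ : IsQuasiIntegral ρ)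
    {g : C_c(Z, ℝ)} (hg : ∀ x, 0 ≤ g x) {t : ℝ} (h : ρ g < t) :
    qiOpen ρ {x | t < g x} = 0 := by
  refine (hρs.qiOpen_eq_zero_or_one (isOpen_lt_apply g t)).resolve_right
    fun h1 => ?_
  have hmarkov := hρ.ofReal_mul_qiOpen_lt_le hg ((hρ.pos g hg).trans_lt h)
  rw [h1, mul_one, ENNReal.ofReal_le_ofReal_iff (hρ.pos g hg)] at hmarkov
  linarith

lemma qiOpen_gt_eq_one_of_lt_map (hρs : IsSimpleQI ρ) (hρ : IsQuasiIntegral ρ)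
    {g : C_c(Z, ℝ)} (hg : ∀ x, 0 ≤ g x) {t : ℝ} (ht : 0 ≤ t) (h : t < ρ g) :
    qiOpen ρ {x | t < g x} = 1 :=
  (hρs.qiOpen_eq_zero_or_one (isOpen_lt_apply g t)).resolve_left fun h0 =>
    (hρs.map_le_of_qiOpen_eq_zero hρ hg ht subset_rfl h0).not_gt h

lemma qiOpen_lt_eq_zero_of_lt_map (hρs : IsSimpleQI ρ) (hρ : IsQuasiIntegral ρ)
    {g : C_c(Z, ℝ)} (hg : ∀ x, 0 ≤ g x) {t : ℝ} (h : t < ρ g) :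
    qiOpen ρ {x | g x < t} = 0 := by
  rcases le_or_gt t 0 with ht | ht
  · rw [show {x | g x < t} = ∅ from eq_empty_of_forall_notMem fun x hx =>
      (hg x).not_gt (lt_of_lt_of_le hx ht), hρ.qiOpen_empty]
  · refine (hρs.qiOpen_eq_zero_or_one (isOpen_apply_lt g t)).resolve_right
      fun h1 => hρs.not_disjoint_of_qiOpen_eq_one hρ h1
        (hρs.qiOpen_gt_eq_one_of_lt_map hρ hg ht.le h) ?_
    exact disjoint_left.2 fun x (h1 : g x < t) (h2 : t < g x) => lt_asymm h1 h2

lemma map_le_map_add (hρs : IsSimpleQI ρ) (hρ : IsQuasiIntegral ρ) {g h : C_c(Z, ℝ)}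
    (hg : ∀ x, 0 ≤ g x) (hh : ∀ x, 0 ≤ h x) {c : ℝ} (hc : 0 ≤ c) (hgh : ∀ x, g x ≤ h x + c) :
    ρ g ≤ ρ h + c :=
  le_of_forall_gt_imp_ge_of_dense fun t ht =>
    hρs.map_le_of_qiOpen_eq_zero hρ hg (by linarith [hρ.pos h hh])
      (fun x (hx : t < g x) => show t - c < h x by linarith [hgh x])
      (hρs.qiOpen_gt_eq_zero_of_map_lt hρ hh (by linarith))

lemma map_mono (hρs : IsSimpleQI ρ) (hρ : IsQuasiIntegral ρ) {g h : C_c(Z, ℝ)}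
    (hg : ∀ x, 0 ≤ g x) (hgh : ∀ x, g x ≤ h x) : ρ g ≤ ρ h := by
  simpa using hρs.map_le_map_add hρ hg (fun x => (hg x).trans (hgh x)) le_rfl (by simpa using hgh)

lemma abs_map_sub_map_le (hρs : IsSimpleQI ρ) (hρ : IsQuasiIntegral ρ) {u v : C_c(Z, ℝ)}
    {c : ℝ} (hc : 0 ≤ c) (huv : ∀ x, |u x - v x| ≤ c) : |ρ u - ρ v| ≤ 2 * c := by
  have hpart : ∀ a b : C_c(Z, ℝ), (∀ x, |a x - b x| ≤ c) → ρ (pPart a) ≤ ρ (pPart b) + c :=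
    fun a b hab => hρs.map_le_map_add hρ (fun x => by simp) (fun x => by simp) hc fun x => by
      have := (le_abs_self _).trans ((abs_max_sub_max_le_abs (a x) (b x) 0).trans (hab x))
      simp only [pPart_apply]
      linarith
  have hneg : ∀ a : C_c(Z, ℝ), nPart a = pPart (-a) := fun a => by ext x; simp
  have hneg_abs : ∀ a b : C_c(Z, ℝ), (∀ x, |a x - b x| ≤ c) → ∀ x, |(-a) x - (-b) x| ≤ c :=
    fun a b hab x => by
      simp only [coe_neg, Pi.neg_apply, neg_sub_neg]
      rw [abs_sub_comm]
      exact hab x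
  have h1 := hpart u v huv
  have h2 := hpart v u fun x => abs_sub_comm (v x) (u x) ▸ huv x
  have h3 := hpart (-u) (-v) (hneg_abs u v huv)
  have h4 := hpart (-v) (-u) (hneg_abs v u fun x => abs_sub_comm (v x) (u x) ▸ huv x)
  rw [hρ.map_eq_pPart_sub_nPart u, hρ.map_eq_pPart_sub_nPart v, hneg, hneg, abs_le]
  constructor <;> linarith

/-- Split `φ ∘ k` at the level `ρ k` into the parts where `k ≤ ρ k` and `k ≥ ρ k`: the first is
small except on `{k < ρ k - δ}`, the second except on `{k > ρ k + δ}`, and both sets are null. -/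
lemma map_comp_eq_zero_of_nonneg (hρs : IsSimpleQI ρ) (hρ : IsQuasiIntegral ρ)
    {k : C_c(Z, ℝ)} (hk : ∀ x, 0 ≤ k x) {φ : C(ℝ, ℝ)} (hφ0 : φ 0 = 0) (hφr : φ (ρ k) = 0)
    (hφ : ∀ s, 0 ≤ φ s) : ρ (compCc φ hφ0 k) = 0 := by
  set r := ρ k
  have hr : 0 ≤ r := hρ.pos k hk
  refine le_antisymm (le_of_forall_pos_le_add fun ε hε => ?_) (hρ.pos _ fun x => hφ _)
  obtain ⟨δ, hδ, hφδ⟩ := Metric.continuousAt_iff.1 φ.continuous.continuousAt (ε / 2) (half_pos hε)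
  have hsmall : ∀ s, |s - r| ≤ δ / 2 → φ s ≤ ε / 2 := fun s hs => by
    have := hφδ (show dist s r < δ by rw [Real.dist_eq]; linarith)
    rw [Real.dist_eq, hφr, sub_zero] at this
    exact (le_abs_self _).trans this.le
  set g₁ := compCc (φ.comp (cmin r)) (by simp [hr, hφ0]) k
  set g₂ := compCc (φ.comp (cmax r)) (by simp [hr, hφr]) k
  have hsplit : ρ (compCc φ hφ0 k) = ρ g₁ + ρ g₂ := by
    rw [← hρ.add k g₁ g₂ (InB.compCc _) (InB.compCc _)]
    congr 1
    ext x
    rcases le_total (k x) r with h | h <;> simp [g₁, g₂, h, hφr]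
  have h₁ : ρ g₁ ≤ ε / 2 :=
    hρs.map_le_of_qiOpen_eq_zero hρ (fun x => hφ _) (half_pos hε).le
      (fun x (hx : ε / 2 < φ (min (k x) r)) => show k x < r - δ / 2 by
        by_contra! h
        refine hx.not_ge (hsmall _ (abs_le.2 ⟨?_, ?_⟩))
        · linarith [le_min h (by linarith : r - δ / 2 ≤ r)]
        · linarith [min_le_right (k x) r])
      (hρs.qiOpen_lt_eq_zero_of_lt_map hρ hk (by linarith))
  have h₂ : ρ g₂ ≤ ε / 2 :=
    hρs.map_le_of_qiOpen_eq_zero hρ (fun x => hφ _) (half_pos hε).le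
      (fun x (hx : ε / 2 < φ (max (k x) r)) => show r + δ / 2 < k x by
        by_contra! h
        refine hx.not_ge (hsmall _ (abs_le.2 ⟨?_, ?_⟩))
        · linarith [le_max_right (k x) r]
        · linarith [max_le h (by linarith : r ≤ r + δ / 2)])
      (hρs.qiOpen_gt_eq_zero_of_map_lt hρ hk (by linarith))
  linarith

lemma map_comp_eq_zero (hρs : IsSimpleQI ρ) (hρ : IsQuasiIntegral ρ) {k : C_c(Z, ℝ)}
    (hk : ∀ x, 0 ≤ k x) {φ : C(ℝ, ℝ)} (hφ0 : φ 0 = 0) (hφr : φ (ρ k) = 0) :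
    ρ (compCc φ hφ0 k) = 0 := by
  have hpos : pPart (compCc φ hφ0 k) = compCc ((cmax 0).comp φ) (by simp [hφ0]) k := rfl
  have hneg : nPart (compCc φ hφ0 k) = compCc (cneg.comp φ) (by simp [hφ0]) k := rfl
  rw [hρ.map_eq_pPart_sub_nPart, hpos, hneg,
    hρs.map_comp_eq_zero_of_nonneg hρ hk _ (by simp [hφr]) fun s => le_max_right _ _,
    hρs.map_comp_eq_zero_of_nonneg hρ hk _ (by simp [hφr]) fun s => le_max_right _ _, sub_zero]

/-- Subtracting `(φ r / r) • id` reduces to the case `φ r = 0`; at `r = 0` Lean's `φ 0 / 0 = 0`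
is harmless since `φ 0 = 0`. -/
lemma map_comp_of_nonneg (hρs : IsSimpleQI ρ) (hρ : IsQuasiIntegral ρ) {k : C_c(Z, ℝ)}
    (hk : ∀ x, 0 ≤ k x) (φ : C(ℝ, ℝ)) (hφ0 : φ 0 = 0) : ρ (compCc φ hφ0 k) = φ (ρ k) := by
  set r := ρ k
  set a := φ r / r
  have har : a * r = φ r := by
    rcases eq_or_ne r 0 with h | h
    · simp [a, h, hφ0]
    · exact div_mul_cancel₀ _ h
  have hψ0 : (φ - a • ContinuousMap.id ℝ) 0 = 0 := by simp [hφ0]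
  have hψ := hρs.map_comp_eq_zero hρ hk hψ0
    (by simp only [ContinuousMap.sub_apply, ContinuousMap.smul_apply, ContinuousMap.id_apply,
      smul_eq_mul]; exact sub_eq_zero.2 har.symm)
  have hadd := hρ.add k _ (a • k) (InB.compCc hψ0) ⟨a • ContinuousMap.id ℝ, by simp, fun x => rfl⟩
  rw [hψ, hρ.smul, zero_add, har] at hadd
  rw [← hadd]
  congr 1
  ext x
  simp

lemma map_pPart_eq_zero_or_map_nPart_eq_zero (hρs : IsSimpleQI ρ) (hρ : IsQuasiIntegral ρ)
    (k : C_c(Z, ℝ)) : ρ (pPart k) = 0 ∨ ρ (nPart k) = 0 := by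
  by_contra! h
  have hp := (hρ.pos (pPart k) fun x => by simp).lt_of_ne' h.1
  have hn := (hρ.pos (nPart k) fun x => by simp).lt_of_ne' h.2
  refine hρs.not_disjoint_of_qiOpen_eq_one hρ
    (hρs.qiOpen_gt_eq_one_of_lt_map hρ (fun x => by simp) le_rfl hp)
    (hρs.qiOpen_gt_eq_one_of_lt_map hρ (fun x => by simp) le_rfl hn) ?_
  refine disjoint_left.2 fun x (h1 : 0 < pPart k x) (h2 : 0 < nPart k x) => ?_
  simp only [pPart_apply, nPart_apply, lt_max_iff, lt_self_iff_false, or_false] at h1 h2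
  linarith

theorem map_comp (hρs : IsSimpleQI ρ) (hρ : IsQuasiIntegral ρ) (k : C_c(Z, ℝ)) (φ : C(ℝ, ℝ))
    (hφ0 : φ 0 = 0) : ρ (compCc φ hφ0 k) = φ (ρ k) := by
  set ψ : C(ℝ, ℝ) := φ.comp ⟨fun s => -s, continuous_neg⟩
  have hψ0 : ψ 0 = 0 := by simp [ψ, hφ0]
  have hadd := hρ.add k (compCc φ hφ0 (pPart k)) (compCc ψ hψ0 (nPart k))
    ⟨φ.comp (cmax 0), by simp [hφ0], fun x => rfl⟩
    ⟨φ.comp (cmin 0), by simp [hφ0], fun x => by simp [ψ, ← min_neg_neg]⟩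
  rw [hρs.map_comp_of_nonneg hρ (fun x => by simp), hρs.map_comp_of_nonneg hρ (fun x => by simp)]
    at hadd
  have hsum : compCc φ hφ0 (pPart k) + compCc ψ hψ0 (nPart k) = compCc φ hφ0 k := by
    ext x
    rcases le_total (k x) 0 with h | h <;> simp [ψ, h, hφ0]
  rw [hsum] at hadd
  rw [hadd, hρ.map_eq_pPart_sub_nPart k]
  rcases hρs.map_pPart_eq_zero_or_map_nPart_eq_zero hρ k with h | h <;> simp [ψ, h, hφ0]

end IsSimpleQI

lemma exists_cc_eq_one_on {Z : Type*} [TopologicalSpace Z] [LocallyCompactSpace Z] [T2Space Z]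
    {C V : Set Z} (hC : IsCompact C) (hV : IsOpen V) (hCV : C ⊆ V) :
    ∃ e : C_c(Z, ℝ), (∀ x, 0 ≤ e x ∧ e x ≤ 1) ∧ (∀ x ∈ C, e x = 1) ∧ tsupport e ⊆ V := by
  obtain ⟨L, hL, hCL, hLV⟩ := exists_compact_between hC hV hCV
  obtain ⟨e, he1, he0, hec, he01⟩ := exists_continuous_one_zero_of_isCompact hC
    isOpen_interior.isClosed_compl (disjoint_compl_right_iff_subset.2 hCL)
  refine ⟨⟨e, hec⟩, he01, fun x hx => he1 hx, ?_⟩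
  exact (closure_minimal
    (fun x hx => interior_subset (not_not.1 fun h => Function.mem_support.1 hx (he0 h)))
    hL.isClosed).trans hLV

section Product

variable {X Y : Type*} [TopologicalSpace X] [TopologicalSpace Y] [T2Space X]
  {ρ : C_c(X, ℝ) → ℝ} {η : C_c(Y, ℝ) → ℝ}

@[simp] lemma fiberY_apply (f : C_c(X × Y, ℝ)) (y : Y) (x : X) : fiberY f y x = f (x, y) := rfl

lemma tsupport_fiberY_subset (f : C_c(X × Y, ℝ)) (y : Y) :
    tsupport (fiberY f y) ⊆ {x | (x, y) ∈ tsupport f} :=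
  closure_minimal (fun _ hx => subset_tsupport f hx)
    ((isClosed_tsupport f).preimage (continuous_id.prodMk continuous_const))

lemma InB.fiberY {f g : C_c(X × Y, ℝ)} (h : InB f g) (y : Y) :
    InB (fiberY f y) (fiberY g y) :=
  let ⟨φ, hφ, hg⟩ := h
  ⟨φ, hφ, fun x => hg (x, y)⟩

/-- The sections `f_y` depend uniformly continuously on `y`, and a simple quasi-integral is
Lipschitz for the sup norm. -/
lemma continuous_Tmap (hρs : IsSimpleQI ρ) (hρ : IsQuasiIntegral ρ) (f : C_c(X × Y, ℝ)) :
    Continuous (Tmap ρ f) := by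
  refine continuous_iff_continuousAt.2 fun y₀ => Metric.tendsto_nhds.2 fun ε hε => ?_
  obtain ⟨v, hv, hvclose⟩ := (f.hasCompactSupport'.image continuous_fst).mem_uniformity_of_prod
    (f := fun y x => f (x, y)) (s := univ) (f.continuous.comp continuous_swap).continuousOn
    (mem_univ y₀) (Metric.dist_mem_uniformity (by positivity : 0 < ε / 3))
  rw [nhdsWithin_univ] at hv
  filter_upwards [hv] with y hy
  have hclose : ∀ x, |fiberY f y x - fiberY f y₀ x| ≤ ε / 3 := fun x => by
    by_cases hx : x ∈ Prod.fst '' tsupport f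
    · have h : dist (f (x, y)) (f (x, y₀)) < ε / 3 := hvclose y hy x hx
      rw [Real.dist_eq] at h
      exact h.le
    · have hzero : ∀ y', f (x, y') = 0 := fun y' =>
        image_eq_zero_of_notMem_tsupport fun h => hx ⟨_, h, rfl⟩
      simp only [fiberY_apply, hzero, sub_self, abs_zero]
      positivity
  rw [Real.dist_eq]
  exact (hρs.abs_map_sub_map_le hρ (by positivity) hclose).trans_lt (by linarith)

variable [T2Space Y]

lemma hasCompactSupport_Tmap (hρ : IsQuasiIntegral ρ) (f : C_c(X × Y, ℝ)) :
    HasCompactSupport (Tmap ρ f) := by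
  refine HasCompactSupport.intro (f.hasCompactSupport'.image continuous_snd) fun y hy => ?_
  have hzero : fiberY f y = 0 := by
    ext x
    by_contra hx
    exact hy ⟨(x, y), subset_tsupport f hx, rfl⟩
  simp [Tmap, hzero, hρ.map_zero]

lemma TCc_apply (hρs : IsSimpleQI ρ) (hρ : IsQuasiIntegral ρ) (f : C_c(X × Y, ℝ)) (y : Y) :
    TCc ρ f y = ρ (fiberY f y) := by
  rw [TCc, dif_pos ⟨continuous_Tmap hρs hρ f, hasCompactSupport_Tmap hρ f⟩]
  rfl

lemma TCc_nonneg_le_one (hρs : IsSimpleQI ρ) (hρ : IsQuasiIntegral ρ) {f : C_c(X × Y, ℝ)}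
    (hf : ∀ p, 0 ≤ f p ∧ f p ≤ 1) (y : Y) : 0 ≤ TCc ρ f y ∧ TCc ρ f y ≤ 1 := by
  rw [TCc_apply hρs hρ]
  exact ⟨hρ.pos _ fun x => (hf (x, y)).1,
    hρs.map_le_of_le hρ one_pos (fun x => (hf (x, y)).1) fun x => (hf (x, y)).2⟩

lemma InB.TCc (hρs : IsSimpleQI ρ) (hρ : IsQuasiIntegral ρ) {f g : C_c(X × Y, ℝ)}
    (h : InB f g) : InB (TCc ρ f) (TCc ρ g) := by
  obtain ⟨φ, hφ, hg⟩ := h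
  refine ⟨φ, hφ, fun y => ?_⟩
  rw [TCc_apply hρs hρ, TCc_apply hρs hρ, ← hρs.map_comp hρ _ φ hφ]
  congr 1
  ext x
  exact hg (x, y)

theorem prodQI_isQuasiIntegral (hρs : IsSimpleQI ρ) (hρ : IsQuasiIntegral ρ)
    (hη : IsQuasiIntegral η) : IsQuasiIntegral (prodQI η ρ) := by
  refine ⟨fun a f => ?_, fun f g h hg hh => ?_, fun f hf => hη.pos _ fun y => ?_⟩
  · have hT : TCc ρ (a • f) = a • TCc ρ f := by
      ext y
      simp only [CompactlySupportedContinuousMap.smul_apply, TCc_apply hρs hρ, smul_eq_mul,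
        ← hρ.smul]
      rfl
    simp only [prodQI, hT, hη.smul]
  · have hT : TCc ρ (g + h) = TCc ρ g + TCc ρ h := by
      ext y
      simp only [coe_add, Pi.add_apply, TCc_apply hρs hρ]
      exact hρ.add _ _ _ (hg.fiberY y) (hh.fiberY y)
    simp only [prodQI, hT]
    exact hη.add _ _ _ (hg.TCc hρs hρ) (hh.TCc hρs hρ)
  · rw [TCc_apply hρs hρ]
    exact hρ.pos _ fun x => hf (x, y)

end Product

section Sections

variable {X Y : Type*} [TopologicalSpace X] [TopologicalSpace Y]

def fullSections (ρ : C_c(X, ℝ) → ℝ) (A : Set (X × Y)) : Set Y :=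
  {y | qiMeas ρ {x | (x, y) ∈ A} = 1}

lemma isOpen_sectionY {U : Set (X × Y)} (hU : IsOpen U) (y : Y) : IsOpen {x | (x, y) ∈ U} :=
  hU.preimage (continuous_id.prodMk continuous_const)

lemma fullSections_subset_fullSections {ρ : C_c(X, ℝ) → ℝ} (hρs : IsSimpleQI ρ)
    {A O : Set (X × Y)} (hO : IsOpen O) (hAO : A ⊆ O) : fullSections ρ A ⊆ fullSections ρ O :=
  fun y (hy : qiMeas ρ _ = 1) => show qiMeas ρ _ = 1 by
    rw [qiMeas_of_isOpen ρ (isOpen_sectionY hO y)]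
    exact le_antisymm (hρs.qiOpen_le_one (isOpen_sectionY hO y))
      (hy ▸ qiMeas_le_qiOpen ρ (isOpen_sectionY hO y) fun x hx => hAO hx)

end Sections

section OpenSets

variable {X Y : Type*} [TopologicalSpace X] [TopologicalSpace Y]
  {ρ : C_c(X, ℝ) → ℝ} {η : C_c(Y, ℝ) → ℝ} {U : Set (X × Y)}

/-- Start from `h₀` with `ρ h₀ > 1/2`; multiplicativity gives `ρ (min (2 h₀) 1) = 1`. -/
lemma exists_tube_of_mem_fullSections (hρs : IsSimpleQI ρ) (hρ : IsQuasiIntegral ρ)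
    (hU : IsOpen U) {y : Y} (hy : y ∈ fullSections ρ U) :
    ∃ h : C_c(X, ℝ), (∀ x, 0 ≤ h x ∧ h x ≤ 1) ∧ ρ h = 1 ∧ ∃ N ∈ 𝓝 y, tsupport h ×ˢ N ⊆ U := by
  have hy1 : qiOpen ρ {x | (x, y) ∈ U} = 1 := by
    rw [← qiMeas_of_isOpen ρ (isOpen_sectionY hU y)]
    exact hy
  obtain ⟨h₀, h₀01, h₀U, hh₀⟩ :=
    exists_lt_of_lt_qiOpen (hy1 ▸ (by norm_num : ENNReal.ofReal (1 / 2) < 1))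
  rw [ENNReal.ofReal_lt_ofReal_iff_of_nonneg (by norm_num)] at hh₀
  obtain ⟨u, v, -, hv, hu, hyv, huv⟩ := generalized_tube_lemma h₀.hasCompactSupport'
    isCompact_singleton hU (by rintro ⟨x, y'⟩ ⟨hx, rfl⟩; exact h₀U hx)
  let φ : C(ℝ, ℝ) := ⟨fun s => min (2 * s) 1, by fun_prop⟩
  refine ⟨compCc φ (by simp [φ]) h₀, fun x => ⟨?_, ?_⟩, ?_, v, hv.mem_nhds (hyv rfl), ?_⟩
  · simp [φ, (h₀01 x).1]
  · simp [φ]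
  · rw [hρs.map_comp hρ]
    simp only [φ, ContinuousMap.coe_mk, min_eq_right_iff]
    linarith
  · exact (prod_mono (tsupport_compCc_subset.trans hu) subset_rfl).trans huv

lemma isOpen_fullSections (hρs : IsSimpleQI ρ) (hρ : IsQuasiIntegral ρ) (hU : IsOpen U) :
    IsOpen (fullSections ρ U) := by
  refine isOpen_iff_mem_nhds.2 fun y hy => ?_
  obtain ⟨h, h01, hρh, N, hN, hNU⟩ := exists_tube_of_mem_fullSections hρs hρ hU hy
  filter_upwards [hN] with y' hy'
  have hle := le_qiOpen ρ h01 (U := {x | (x, y') ∈ U}) fun x hx => hNU ⟨hx, hy'⟩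
  rw [hρh, ENNReal.ofReal_one] at hle
  show qiMeas ρ _ = 1
  rw [qiMeas_of_isOpen ρ (isOpen_sectionY hU y')]
  exact le_antisymm (hρs.qiOpen_le_one (isOpen_sectionY hU y')) hle

variable [T2Space X] [T2Space Y] [LocallyCompactSpace Y]

lemma ofReal_map_TCc_le (hρs : IsSimpleQI ρ) (hρ : IsQuasiIntegral ρ) (hη : IsQuasiIntegral η)
    (hνcf : ∀ K : Set Y, IsCompact K → qiMeas η K ≠ ∞) (hU : IsOpen U) {f : C_c(X × Y, ℝ)}
    (hf : ∀ p, 0 ≤ f p ∧ f p ≤ 1) (hfU : tsupport f ⊆ U) :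
    ENNReal.ofReal (η (TCc ρ f)) ≤ qiOpen η (fullSections ρ U) := by
  obtain ⟨L, hL, hTL⟩ := exists_compact_superset (TCc ρ f).hasCompactSupport'
  refine hη.ofReal_le_qiOpen_of_support_subset (fun y => (TCc_nonneg_le_one hρs hρ hf y).1)
    (fun y => (TCc_nonneg_le_one hρs hρ hf y).2) (fun y hy => ?_) hTL
    (ne_top_of_le_ne_top (hνcf L hL) (qiOpen_interior_le_qiMeas η L))
  show qiMeas ρ _ = 1
  rw [qiMeas_of_isOpen ρ (isOpen_sectionY hU y)]
  refine (hρs.qiOpen_eq_zero_or_one (isOpen_sectionY hU y)).resolve_left fun h0 => hy ?_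
  rw [TCc_apply hρs hρ]
  exact hρ.map_eq_zero_of_qiOpen_eq_zero (fun x => (hf (x, y)).1)
    ((tsupport_fiberY_subset f y).trans fun x hx => hfU hx) h0

variable [LocallyCompactSpace X]

/-- Cover `tsupport g` by finitely many compact neighbourhoods `M i` carrying tubes
`tsupport (h i) ×ˢ M i ⊆ U` with `ρ (h i) = 1`; a Urysohn function `f` equal to `1` on the union
of the tubes then has `T_ρ f = 1` on `tsupport g`. -/
lemma le_qiOpen_prodQI (hρs : IsSimpleQI ρ) (hρ : IsQuasiIntegral ρ) (hη : IsQuasiIntegral η)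
    (hU : IsOpen U) {g : C_c(Y, ℝ)} (hg : ∀ y, 0 ≤ g y ∧ g y ≤ 1)
    (hgU : tsupport g ⊆ fullSections ρ U) :
    ENNReal.ofReal (η g) ≤ qiOpen (prodQI η ρ) U := by
  have htube : ∀ y ∈ tsupport g, ∃ h : C_c(X, ℝ), (∀ x, 0 ≤ h x ∧ h x ≤ 1) ∧ ρ h = 1 ∧
      ∃ M ∈ 𝓝 y, IsCompact M ∧ tsupport h ×ˢ M ⊆ U := fun y hy => by
    obtain ⟨h, h01, hρh, N, hN, hNU⟩ := exists_tube_of_mem_fullSections hρs hρ hU (hgU hy)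
    obtain ⟨M, hM, hMN, hMc⟩ := local_compact_nhds hN
    exact ⟨h, h01, hρh, M, hM, hMc, (prod_mono subset_rfl hMN).trans hNU⟩
  choose! h h01 hρh M hM hMc hMU using htube
  obtain ⟨t, htg, hgt⟩ := g.hasCompactSupport'.elim_nhds_subcover M hM
  obtain ⟨f, hf01, hf1, hfU⟩ := exists_cc_eq_one_on
    (t.isCompact_biUnion fun i hi => (h i).hasCompactSupport'.prod (hMc i (htg i hi))) hU
    (iUnion₂_subset fun i hi => hMU i (htg i hi))
  have hT : ∀ y ∈ tsupport g, TCc ρ f y = 1 := fun y hy => by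
    obtain ⟨i, hi, hyi⟩ := mem_iUnion₂.1 (hgt hy)
    refine le_antisymm (TCc_nonneg_le_one hρs hρ hf01 y).2 ?_
    rw [TCc_apply hρs hρ, ← hρh i (htg i hi)]
    refine hρs.map_mono hρ (fun x => (h01 i (htg i hi) x).1) fun x => ?_
    by_cases hx : x ∈ tsupport (h i)
    · rw [fiberY_apply, hf1 _ (mem_iUnion₂.2 ⟨i, hi, hx, hyi⟩)]
      exact (h01 i (htg i hi) x).2
    · rw [image_eq_zero_of_notMem_tsupport hx]
      exact (hf01 _).1
  calc ENNReal.ofReal (η g) ≤ ENNReal.ofReal (η (TCc ρ f)) :=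
        ENNReal.ofReal_le_ofReal <| hη.map_le_map_of_eq_one (fun y => (hg y).1)
          (fun y => (hg y).2) (fun y => (TCc_nonneg_le_one hρs hρ hf01 y).1)
          (fun y => (TCc_nonneg_le_one hρs hρ hf01 y).2)
          fun y hy => hT y (subset_tsupport g hy.ne')
    _ ≤ qiOpen (prodQI η ρ) U := le_qiOpen _ hf01 hfU

theorem qiMeas_prodQI_of_isOpen (hρs : IsSimpleQI ρ) (hρ : IsQuasiIntegral ρ)
    (hη : IsQuasiIntegral η) (hνcf : ∀ K : Set Y, IsCompact K → qiMeas η K ≠ ∞)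
    (hU : IsOpen U) : qiMeas (prodQI η ρ) U = qiMeas η (fullSections ρ U) := by
  rw [qiMeas_of_isOpen _ hU, qiMeas_of_isOpen _ (isOpen_fullSections hρs hρ hU)]
  exact le_antisymm (iSup₂_le fun f hf => ofReal_map_TCc_le hρs hρ hη hνcf hU hf.1 hf.2)
    (iSup₂_le fun g hg => le_qiOpen_prodQI hρs hρ hη hU hg.1 hg.2)

end OpenSets

section CompactSets

variable {X Y : Type*} [TopologicalSpace X] [TopologicalSpace Y] [T2Space Y]
  {ρ : C_c(X, ℝ) → ℝ} {K : Set (X × Y)}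

lemma eventually_sectionY_subset (hK : IsCompact K) {V : Set X} (hV : IsOpen V) {y₀ : Y}
    (h : {x | (x, y₀) ∈ K} ⊆ V) : ∀ᶠ y in 𝓝 y₀, {x | (x, y) ∈ K} ⊆ V := by
  have hP : IsCompact (Prod.snd '' (K ∩ Prod.fst ⁻¹' Vᶜ)) :=
    (hK.inter_right (hV.isClosed_compl.preimage continuous_fst)).image continuous_snd
  filter_upwards [hP.isClosed.isOpen_compl.mem_nhds
    (by rintro ⟨⟨x, y⟩, ⟨hpK, hpV⟩, rfl⟩; exact hpV (h hpK))] with y hy x hx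
  by_contra hxV
  exact hy ⟨(x, y), ⟨hx, hxV⟩, rfl⟩

variable [T2Space X]

lemma exists_null_open_of_notMem_fullSections (hρs : IsSimpleQI ρ) (hK : IsCompact K) {y : Y}
    (hy : y ∉ fullSections ρ K) :
    ∃ V, IsOpen V ∧ qiOpen ρ V = 0 ∧ ∀ᶠ y' in 𝓝 y, {x | (x, y') ∈ K} ⊆ V := by
  have hclosed : IsClosed {x | (x, y) ∈ K} :=
    hK.isClosed.preimage (continuous_id.prodMk continuous_const)
  have h0 := (hρs _ (Or.inr hclosed)).resolve_right hy
  rw [qiMeas_eq_iInf] at h0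
  obtain ⟨V, hV⟩ := iInf_lt_iff.1 (h0.trans_lt zero_lt_one)
  obtain ⟨⟨hVo, hKV⟩, hV1⟩ := iInf_lt_iff.1 hV
  exact ⟨V, hVo, (hρs.qiOpen_eq_zero_or_one hVo).resolve_right hV1.ne,
    eventually_sectionY_subset hK hVo hKV⟩

lemma isClosed_fullSections (hρs : IsSimpleQI ρ) (hK : IsCompact K) :
    IsClosed (fullSections ρ K) := by
  refine isOpen_compl_iff.1 (isOpen_iff_mem_nhds.2 fun y hy => ?_)
  obtain ⟨V, hV, hV0, hKV⟩ := exists_null_open_of_notMem_fullSections hρs hK hy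
  filter_upwards [hKV] with y' hy' (h1 : qiMeas ρ _ = 1)
  have hle := qiMeas_le_qiOpen ρ hV hy'
  rw [h1, hV0] at hle
  exact one_ne_zero (nonpos_iff_eq_zero.1 hle)

/-- Over the compact set `P` of points outside `V`, the sections of `K` lie in null open sets
`N i` uniformly over finitely many closed neighbourhoods `M i`. The open set `O` cuts `K` off
inside `N i` above `M i`, so every section of `O` outside `V` lies in a single null set; a
union of null sets would not do, as topological measures need not be subadditive. -/
lemma exists_isOpen_superset_fullSections_subset [LocallyCompactSpace Y]
    (hρs : IsSimpleQI ρ) (hρ : IsQuasiIntegral ρ) (hK : IsCompact K) {V : Set Y} (hV : IsOpen V)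
    (hKV : fullSections ρ K ⊆ V) :
    ∃ O, IsOpen O ∧ K ⊆ O ∧ fullSections ρ O ⊆ V := by
  have hP : IsCompact (Prod.snd '' K \ V) := (hK.image continuous_snd).diff hV
  have hnull : ∀ y ∈ Prod.snd '' K \ V, ∃ N : Set X, IsOpen N ∧ qiOpen ρ N = 0 ∧
      ∃ M ∈ 𝓝 y, IsClosed M ∧ ∀ y' ∈ M, {x | (x, y') ∈ K} ⊆ N := fun y hy => by
    obtain ⟨N, hN, hN0, hKN⟩ :=
      exists_null_open_of_notMem_fullSections hρs hK fun h => hy.2 (hKV h)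
    obtain ⟨M, hM, hMc, hMN⟩ := exists_mem_nhds_isClosed_subset hKN
    exact ⟨N, hN, hN0, M, hM, hMc, hMN⟩
  choose! N hN hN0 M hM hMc hMN using hnull
  obtain ⟨t, htP, hPt⟩ := hP.elim_nhds_subcover (fun y => interior (M y))
    fun y hy => interior_mem_nhds.2 (hM y hy)
  set O : Set (X × Y) := Prod.snd ⁻¹' (V ∪ ⋃ i ∈ t, interior (M i)) ∩
    ⋂ i ∈ t, (Prod.snd ⁻¹' (M i)ᶜ ∪ Prod.fst ⁻¹' N i)
  refine ⟨O, ?_, ?_, fun y hy => by_contra fun hyV => ?_⟩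
  · exact ((hV.union (isOpen_biUnion fun i _ => isOpen_interior)).preimage continuous_snd).inter
      (isOpen_biInter_finset fun i hi => ((hMc i (htP i hi)).isOpen_compl.preimage
        continuous_snd).union ((hN i (htP i hi)).preimage continuous_fst))
  · rintro ⟨x, y⟩ hxy
    refine ⟨?_, mem_iInter₂.2 fun i hi => ?_⟩
    · by_cases hyV : y ∈ V
      · exact Or.inl hyV
      · exact Or.inr (hPt ⟨⟨_, hxy, rfl⟩, hyV⟩)
    · by_cases hyM : y ∈ M i
      · exact Or.inr (hMN i (htP i hi) y hyM hxy)
      · exact Or.inl hyM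
  obtain ⟨N', hN', hN'0, hON'⟩ :
      ∃ N', IsOpen N' ∧ qiOpen ρ N' = 0 ∧ {x | (x, y) ∈ O} ⊆ N' := by
    by_cases hyM : ∃ i ∈ t, y ∈ interior (M i)
    · obtain ⟨i, hi, hyi⟩ := hyM
      exact ⟨N i, hN i (htP i hi), hN0 i (htP i hi), fun x hx =>
        (mem_iInter₂.1 hx.2 i hi).resolve_left (not_not.2 (interior_subset hyi))⟩
    · refine ⟨∅, isOpen_empty, hρ.qiOpen_empty, fun x hx => hyM ?_⟩
      simpa using hx.1.resolve_left hyV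
  have hle := qiMeas_le_qiOpen ρ hN' hON'
  rw [show qiMeas ρ _ = 1 from hy, hN'0] at hle
  exact one_ne_zero (nonpos_iff_eq_zero.1 hle)

theorem qiMeas_prodQI_of_isCompact [LocallyCompactSpace X] [LocallyCompactSpace Y]
    {η : C_c(Y, ℝ) → ℝ} (hρs : IsSimpleQI ρ) (hρ : IsQuasiIntegral ρ) (hη : IsQuasiIntegral η)
    (hνcf : ∀ K : Set Y, IsCompact K → qiMeas η K ≠ ∞) (hK : IsCompact K) :
    qiMeas (prodQI η ρ) K = qiMeas η (fullSections ρ K) := by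
  have hopen : ∀ {O}, IsOpen O → qiOpen (prodQI η ρ) O = qiOpen η (fullSections ρ O) :=
    fun hO => by
      rw [← qiMeas_of_isOpen _ hO, qiMeas_prodQI_of_isOpen hρs hρ hη hνcf hO,
        qiMeas_of_isOpen _ (isOpen_fullSections hρs hρ hO)]
  refine le_antisymm ?_ ?_
  · rw [qiMeas_eq_iInf η]
    refine le_iInf₂ fun V hV => ?_
    obtain ⟨O, hO, hKO, hOV⟩ :=
      exists_isOpen_superset_fullSections_subset hρs hρ hK hV.1 hV.2
    calc qiMeas (prodQI η ρ) K ≤ qiOpen (prodQI η ρ) O := qiMeas_le_qiOpen _ hO hKO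
      _ = qiOpen η (fullSections ρ O) := hopen hO
      _ ≤ qiOpen η V := qiOpen_mono η hOV
  · rw [qiMeas_eq_iInf (prodQI η ρ)]
    refine le_iInf₂ fun O hO => ?_
    rw [hopen hO.1]
    exact qiMeas_le_qiOpen η (isOpen_fullSections hρs hρ hO.1)
      (fullSections_subset_fullSections hρs hO.1 hO.2)

end CompactSets

theorem statement14_general {X Y : Type*}
    [TopologicalSpace X] [LocallyCompactSpace X] [T2Space X]
    [TopologicalSpace Y] [LocallyCompactSpace Y] [T2Space Y]
    (ρ : C_c(X, ℝ) → ℝ) (η : C_c(Y, ℝ) → ℝ)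
    (hρ : IsQuasiIntegral ρ) (hη : IsQuasiIntegral η)
    (hρs : IsSimpleQI ρ)
    (hνcf : ∀ K : Set Y, IsCompact K → qiMeas η K ≠ ∞) :
    IsQuasiIntegral (prodQI η ρ) ∧
    (∀ U : Set (X × Y), IsOpen U →
      IsOpen {y : Y | qiMeas ρ {x : X | (x, y) ∈ U} = 1} ∧
      qiMeas (prodQI η ρ) U = qiMeas η {y : Y | qiMeas ρ {x : X | (x, y) ∈ U} = 1}) ∧
    (qiMeas η (Set.univ : Set Y) ≠ ∞ →
      ∀ K : Set (X × Y), IsCompact K →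
        IsClosed {y : Y | qiMeas ρ {x : X | (x, y) ∈ K} = 1} ∧
        qiMeas (prodQI η ρ) K = qiMeas η {y : Y | qiMeas ρ {x : X | (x, y) ∈ K} = 1}) :=
  ⟨prodQI_isQuasiIntegral hρs hρ hη,
    fun _ hU => ⟨isOpen_fullSections hρs hρ hU, qiMeas_prodQI_of_isOpen hρs hρ hη hνcf hU⟩,
    fun _ _ hK => ⟨isClosed_fullSections hρs hK, qiMeas_prodQI_of_isCompact hρs hρ hη hνcf hK⟩⟩

theorem statement14 {X Y : Type*}
    [TopologicalSpace X] [LocallyCompactSpace X] [T2Space X] [ConnectedSpace X]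
    [TopologicalSpace Y] [LocallyCompactSpace Y] [T2Space Y] [ConnectedSpace Y]
    (ρ : C_c(X, ℝ) → ℝ) (η : C_c(Y, ℝ) → ℝ)
    (hρ : IsQuasiIntegral ρ) (hη : IsQuasiIntegral η)
    (hρs : IsSimpleQI ρ)
    (hνcf : ∀ K : Set Y, IsCompact K → qiMeas η K ≠ ∞) :
    IsQuasiIntegral (prodQI η ρ) ∧
    (∀ U : Set (X × Y), IsOpen U →
      IsOpen {y : Y | qiMeas ρ {x : X | (x, y) ∈ U} = 1} ∧
      qiMeas (prodQI η ρ) U = qiMeas η {y : Y | qiMeas ρ {x : X | (x, y) ∈ U} = 1}) ∧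
    (qiMeas η (Set.univ : Set Y) ≠ ∞ →
      ∀ K : Set (X × Y), IsCompact K →
        IsClosed {y : Y | qiMeas ρ {x : X | (x, y) ∈ K} = 1} ∧
        qiMeas (prodQI η ρ) K = qiMeas η {y : Y | qiMeas ρ {x : X | (x, y) ∈ K} = 1}) :=
  statement14_general ρ η hρ hη hρs hνcf

end QLF
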